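/- Suppose u is of class C⁴ on the open set D and satisfies the elastic oscillation equation μ·Δu + (λ+μ)·grad(div u) + Λ·u = 0 at every point of D. Then u satisfies the factored fourth-order equation (Δ + ω₁)(Δ + ω₂)u = 0 on D; explicitly, Δ(Δu) + (ω₁ + ω₂)·Δu + ω₁ω₂·u = 0 at every point of D, where ω₁ = Λ/(λ+2μ) and ω₂ = Λ/μ. -/

import Mathlib

/-!
Taking the divergence of `μ Δu + (λ+μ) ∇ div u + Λ u = 0` and exchanging derivatives (Schwarz)
shows that `div u` solves the Helmholtz equation `(λ+2μ) Δ div u + Λ div u = 0`. Applying `Δ` to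
the `j`-th component of the equation produces `(λ+μ) ∂ⱼ Δ div u`; the `j`-th derivative of the
Helmholtz equation turns it into a multiple of `∂ⱼ div u`, which the equation itself expresses
through `Δuⱼ` and `uⱼ`. Dividing by `μ (λ+2μ)` gives `(Δ + ω₁)(Δ + ω₂) uⱼ = 0`.
-/

noncomputable section

/-- Partial derivative of a scalar function on `ℝ³` in the `i`-th coordinate direction. -/
def pd (i : Fin 3) (f : (Fin 3 → ℝ) → ℝ) : (Fin 3 → ℝ) → ℝ :=
  fun x => fderiv ℝ f x (Pi.single i 1)

/-- Scalar Laplacian on `ℝ³`. -/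
def lap (f : (Fin 3 → ℝ) → ℝ) : (Fin 3 → ℝ) → ℝ :=
  fun x => ∑ i : Fin 3, pd i (pd i f) x

/-- Componentwise (vector) Laplacian on `ℝ³`. -/
def vlap (v : (Fin 3 → ℝ) → (Fin 3 → ℝ)) : (Fin 3 → ℝ) → (Fin 3 → ℝ) :=
  fun x j => lap (fun y => v y j) x

/-- Divergence of a vector field on `ℝ³`. -/
def divg (v : (Fin 3 → ℝ) → (Fin 3 → ℝ)) : (Fin 3 → ℝ) → ℝ :=
  fun x => ∑ i : Fin 3, pd i (fun y => v y i) x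

/-- Gradient of a scalar function on `ℝ³`. -/
def grad (f : (Fin 3 → ℝ) → ℝ) : (Fin 3 → ℝ) → (Fin 3 → ℝ) :=
  fun x i => pd i f x

open Set

section

variable {D : Set (Fin 3 → ℝ)} {x : Fin 3 → ℝ} {f g : (Fin 3 → ℝ) → ℝ}
  {u : (Fin 3 → ℝ) → (Fin 3 → ℝ)} {n : WithTop ℕ∞} {μ lam Λ : ℝ}

theorem pd_congr_of_eqOn (hD : IsOpen D) (h : EqOn f g D) (hx : x ∈ D) (i : Fin 3) :
    pd i f x = pd i g x := by
  rw [pd, pd, (Filter.eventuallyEq_of_mem (hD.mem_nhds hx) h).fderiv_eq]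

theorem pd_const (c : ℝ) (i : Fin 3) : pd i (fun _ => c) = fun _ => 0 := by
  ext
  simp [pd]

theorem pd_add (hf : DifferentiableAt ℝ f x) (hg : DifferentiableAt ℝ g x) (i : Fin 3) :
    pd i (fun y => f y + g y) x = pd i f x + pd i g x := by
  simp [pd, fderiv_fun_add hf hg]

theorem pd_const_mul (c : ℝ) (hf : DifferentiableAt ℝ f x) (i : Fin 3) :
    pd i (fun y => c * f y) x = c * pd i f x := by
  simp [pd, fderiv_const_mul hf]

theorem pd_sum {ι : Type*} {s : Finset ι} {F : ι → (Fin 3 → ℝ) → ℝ}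
    (hF : ∀ k ∈ s, DifferentiableAt ℝ (F k) x) (i : Fin 3) :
    pd i (fun y => ∑ k ∈ s, F k y) x = ∑ k ∈ s, pd i (F k) x := by
  simp [pd, fderiv_fun_sum hF]

theorem ContDiffOn.pd (hf : ContDiffOn ℝ (n + 1) f D) (hD : IsOpen D) (i : Fin 3) :
    ContDiffOn ℝ n (pd i f) D :=
  (hf.fderiv_of_isOpen hD le_rfl).clm_apply contDiffOn_const

theorem ContDiffOn.differentiableAt_of_isOpen (hf : ContDiffOn ℝ n f D) (hD : IsOpen D)
    (hn : n ≠ 0) (hx : x ∈ D) : DifferentiableAt ℝ f x :=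
  (hf.differentiableOn hn).differentiableAt (hD.mem_nhds hx)

theorem pd_comm (hD : IsOpen D) (hf : ContDiffOn ℝ 2 f D) (hx : x ∈ D) (i j : Fin 3) :
    pd i (pd j f) x = pd j (pd i f) x := by
  have hf' : ContDiffAt ℝ 2 f x := hf.contDiffAt (hD.mem_nhds hx)
  have hdf : DifferentiableAt ℝ (fderiv ℝ f) x :=
    (hf'.fderiv_right (m := 1) le_rfl).differentiableAt one_ne_zero
  have hsnd : ∀ k l : Fin 3,
      pd k (pd l f) x = fderiv ℝ (fderiv ℝ f) x (Pi.single k 1) (Pi.single l 1) := fun k l => by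
    unfold pd
    rw [fderiv_clm_apply hdf (differentiableAt_const _)]
    simp
  rw [hsnd, hsnd]
  exact hf'.isSymmSndFDerivAt (by simp [minSmoothness_of_isRCLikeNormedField]) _ _

theorem ContDiffOn.lap (hf : ContDiffOn ℝ (n + 1 + 1) f D) (hD : IsOpen D) :
    ContDiffOn ℝ n (lap f) D :=
  .sum fun i _ => ((hf.pd hD i).pd hD i)

theorem lap_congr_of_eqOn (hD : IsOpen D) (h : EqOn f g D) (hx : x ∈ D) :
    lap f x = lap g x :=
  Finset.sum_congr rfl fun i _ =>
    pd_congr_of_eqOn hD (fun _ hy => pd_congr_of_eqOn hD h hy i) hx i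

theorem lap_const (c : ℝ) : lap (fun _ => c) x = 0 := by
  simp [lap, pd_const]

theorem lap_add (hD : IsOpen D) (hx : x ∈ D) (hf : ContDiffOn ℝ 2 f D)
    (hg : ContDiffOn ℝ 2 g D) : lap (fun y => f y + g y) x = lap f x + lap g x := by
  rw [lap, lap, lap, ← Finset.sum_add_distrib]
  refine Finset.sum_congr rfl fun i _ => ?_
  rw [pd_congr_of_eqOn hD (fun y hy => pd_add (hf.differentiableAt_of_isOpen hD two_ne_zero hy)
    (hg.differentiableAt_of_isOpen hD two_ne_zero hy) i) hx,
    pd_add ((hf.pd (n := 1) hD i).differentiableAt_of_isOpen hD one_ne_zero hx)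
      ((hg.pd (n := 1) hD i).differentiableAt_of_isOpen hD one_ne_zero hx)]

theorem lap_const_mul (hD : IsOpen D) (hx : x ∈ D) (c : ℝ) (hf : ContDiffOn ℝ 2 f D) :
    lap (fun y => c * f y) x = c * lap f x := by
  rw [lap, lap, Finset.mul_sum]
  refine Finset.sum_congr rfl fun i _ => ?_
  rw [pd_congr_of_eqOn hD (fun y hy => pd_const_mul c
    (hf.differentiableAt_of_isOpen hD two_ne_zero hy) i) hx,
    pd_const_mul c ((hf.pd (n := 1) hD i).differentiableAt_of_isOpen hD one_ne_zero hx)]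

theorem lap_sum {ι : Type*} {s : Finset ι} {F : ι → (Fin 3 → ℝ) → ℝ} (hD : IsOpen D) (hx : x ∈ D)
    (hF : ∀ k ∈ s, ContDiffOn ℝ 2 (F k) D) :
    lap (fun y => ∑ k ∈ s, F k y) x = ∑ k ∈ s, lap (F k) x := by
  simp only [lap]
  rw [Finset.sum_comm]
  refine Finset.sum_congr rfl fun i _ => ?_
  rw [pd_congr_of_eqOn hD (fun y hy => pd_sum (fun k hk =>
    (hF k hk).differentiableAt_of_isOpen hD two_ne_zero hy) i) hx,
    pd_sum fun k hk => ((hF k hk).pd (n := 1) hD i).differentiableAt_of_isOpen hD one_ne_zero hx]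

theorem pd_lap_comm (hD : IsOpen D) (hx : x ∈ D) (hf : ContDiffOn ℝ 3 f D) (j : Fin 3) :
    pd j (lap f) x = lap (pd j f) x := by
  unfold lap
  rw [pd_sum fun i _ => (((hf.pd (n := 2) hD i).pd (n := 1) hD i).differentiableAt_of_isOpen
    hD one_ne_zero hx)]
  refine Finset.sum_congr rfl fun i _ => ?_
  rw [pd_comm hD ((hf.pd (n := 2) hD i)) hx,
    pd_congr_of_eqOn hD (fun y hy => pd_comm hD (hf.of_le (by norm_num)) hy j i) hx]

theorem ContDiffOn.divg (hu : ContDiffOn ℝ (n + 1) u D) (hD : IsOpen D) :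
    ContDiffOn ℝ n (divg u) D :=
  .sum fun i _ => (contDiffOn_pi.1 hu i).pd hD i

theorem lap_divg (hD : IsOpen D) (hx : x ∈ D) (hu : ContDiffOn ℝ 3 u D) :
    lap (divg u) x = ∑ j, pd j (lap fun y => u y j) x := by
  unfold divg
  rw [lap_sum hD hx fun j _ => (contDiffOn_pi.1 hu j).pd hD j]
  exact Finset.sum_congr rfl fun j _ => (pd_lap_comm hD hx (contDiffOn_pi.1 hu j) j).symm

def IsElasticOscillation (μ lam Λ : ℝ) (D : Set (Fin 3 → ℝ))
    (u : (Fin 3 → ℝ) → (Fin 3 → ℝ)) : Prop :=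
  ∀ x ∈ D, ∀ j : Fin 3, μ * vlap u x j + (lam + μ) * grad (divg u) x j + Λ * u x j = 0

namespace IsElasticOscillation

theorem eqOn_zero (h : IsElasticOscillation μ lam Λ D u) (j : Fin 3) :
    EqOn (fun y => μ * lap (fun z => u z j) y + (lam + μ) * pd j (divg u) y + Λ * u y j)
      (fun _ => 0) D :=
  fun y hy => h y hy j

theorem helmholtz_divg (h : IsElasticOscillation μ lam Λ D u) (hD : IsOpen D) (hx : x ∈ D)
    (hu : ContDiffOn ℝ 3 u D) : (lam + 2 * μ) * lap (divg u) x + Λ * divg u x = 0 := by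
  have hterm : ∀ j, μ * pd j (lap fun y => u y j) x + (lam + μ) * pd j (pd j (divg u)) x
      + Λ * pd j (fun y => u y j) x = 0 := by
    intro j
    have hu_j : ContDiffOn ℝ 3 (fun y => u y j) D := contDiffOn_pi.1 hu j
    have h1 : DifferentiableAt ℝ (lap fun y => u y j) x :=
      (hu_j.lap (n := 1) hD).differentiableAt_of_isOpen hD one_ne_zero hx
    have h2 : DifferentiableAt ℝ (pd j (divg u)) x :=
      (((hu.divg (n := 2) hD).pd (n := 1) hD j)).differentiableAt_of_isOpen hD one_ne_zero hx
    have h3 : DifferentiableAt ℝ (fun y => u y j) x :=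
      hu_j.differentiableAt_of_isOpen hD (by norm_num) hx
    rw [← pd_const_mul _ h1, ← pd_const_mul _ h2, ← pd_const_mul _ h3,
      ← pd_add (by fun_prop) (by fun_prop), ← pd_add (by fun_prop) (by fun_prop),
      pd_congr_of_eqOn hD (h.eqOn_zero j) hx, pd_const]
  have hsum := Finset.sum_eq_zero fun j (_ : j ∈ Finset.univ) => hterm j
  simp only [Finset.sum_add_distrib, ← Finset.mul_sum, ← lap_divg hD hx hu] at hsum
  change μ * lap (divg u) x + (lam + μ) * lap (divg u) x + Λ * divg u x = 0 at hsum
  linear_combination hsum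

theorem helmholtz_grad_divg (h : IsElasticOscillation μ lam Λ D u) (hD : IsOpen D) (hx : x ∈ D)
    (hu : ContDiffOn ℝ 4 u D) (j : Fin 3) :
    (lam + 2 * μ) * pd j (lap (divg u)) x + Λ * pd j (divg u) x = 0 := by
  have hd : ContDiffOn ℝ 3 (divg u) D := hu.divg hD
  have h1 : DifferentiableAt ℝ (lap (divg u)) x :=
    (hd.lap (n := 1) hD).differentiableAt_of_isOpen hD one_ne_zero hx
  have h2 : DifferentiableAt ℝ (divg u) x := hd.differentiableAt_of_isOpen hD (by norm_num) hx
  rw [← pd_const_mul _ h1, ← pd_const_mul _ h2, ← pd_add (by fun_prop) (by fun_prop),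
    pd_congr_of_eqOn hD (g := fun _ => 0)
      (fun y hy => h.helmholtz_divg hD hy (hu.of_le (by norm_num))) hx, pd_const]

theorem lap_component_eq_zero (h : IsElasticOscillation μ lam Λ D u) (hD : IsOpen D) (hx : x ∈ D)
    (hu : ContDiffOn ℝ 4 u D) (j : Fin 3) :
    μ * lap (lap fun y => u y j) x + (lam + μ) * pd j (lap (divg u)) x
      + Λ * lap (fun y => u y j) x = 0 := by
  have hu_j : ContDiffOn ℝ 4 (fun y => u y j) D := contDiffOn_pi.1 hu j
  have hd : ContDiffOn ℝ 3 (divg u) D := hu.divg hD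
  have h1 : ContDiffOn ℝ 2 (lap fun y => u y j) D := hu_j.lap hD
  have h2 : ContDiffOn ℝ 2 (pd j (divg u)) D := hd.pd hD j
  have h3 : ContDiffOn ℝ 2 (fun y => u y j) D := hu_j.of_le (by norm_num)
  rw [pd_lap_comm hD hx hd, ← lap_const_mul hD hx _ h1, ← lap_const_mul hD hx _ h2,
    ← lap_const_mul hD hx _ h3, ← lap_add hD hx (by fun_prop) (by fun_prop),
    ← lap_add hD hx (by fun_prop) (by fun_prop), lap_congr_of_eqOn hD (h.eqOn_zero j) hx, lap_const]

end IsElasticOscillation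

end

/-- If a `C⁴` vector field `u` satisfies the elastic oscillation equation
`μ Δu + (λ+μ) grad (div u) + Λ u = 0` on an open set `D`, then `u` satisfies the factored
fourth-order equation `(Δ + ω₁)(Δ + ω₂)u = 0`, i.e.
`Δ(Δu) + (ω₁+ω₂) Δu + ω₁ω₂ u = 0` on `D`, where `ω₁ = Λ/(λ+2μ)` and `ω₂ = Λ/μ`. -/
theorem factored_fourth_order_equation
    (μ lam Λ : ℝ) (hμ : 0 < μ) (hlam : 0 < lam + 2 * μ)
    (D : Set (Fin 3 → ℝ)) (hD : IsOpen D)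
    (u : (Fin 3 → ℝ) → (Fin 3 → ℝ)) (hu : ContDiffOn ℝ 4 u D)
    (heq : ∀ x ∈ D, ∀ j : Fin 3,
      μ * vlap u x j + (lam + μ) * grad (divg u) x j + Λ * u x j = 0) :
    ∀ x ∈ D, ∀ j : Fin 3,
      vlap (vlap u) x j + (Λ / (lam + 2 * μ) + Λ / μ) * vlap u x j
        + (Λ / (lam + 2 * μ)) * (Λ / μ) * u x j = 0 := by
  intro x hx j
  have heq_j : μ * lap (fun y => u y j) x + (lam + μ) * pd j (divg u) x + Λ * u x j = 0 :=
    heq x hx j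
  have hgrad := IsElasticOscillation.helmholtz_grad_divg heq hD hx hu j
  have hlap := IsElasticOscillation.lap_component_eq_zero heq hD hx hu j
  change lap (lap fun y => u y j) x + _ * lap (fun y => u y j) x + _ = 0
  field_simp
  linear_combination (lam + 2 * μ) * hlap - (lam + μ) * hgrad + Λ * heq_j
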